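/- If n < 2k-1, then W_n^(k) contains no square factor. -/

import Mathlib

def kbon (k : ℕ) (n : ℕ) : ℕ :=
  if _h1 : n < k - 1 then 0
  else if _h2 : n = k - 1 then 1
  else ∑ i ∈ Finset.range k, kbon k (n - i - 1)
termination_by n
decreasing_by omega

/-- The k-bonacci morphism on words over ℕ. -/
def phiW (k : ℕ) (w : List ℕ) : List ℕ :=
  w.flatMap (fun a => if a % k = k - 1 then [a + 1] else [k * (a / k), a + 1])

/-- The finite k-bonacci word over the infinite alphabet ℕ. -/
def W (k n : ℕ) : List ℕ := (phiW k)^[n] [0]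

/-!
Letters divisible by `k` are exactly the first letters of the blocks `φ_k(a)`, and the block of `a`
ends in `a + 1`, so `φ_k` is recognizable: a square in `φ_k(w)` can be shifted to start at a block
boundary and then pulled back to `w`. The pull-back is again a square unless its last letter `k - 1`
(block `[k]`) is matched against a letter `b ≥ k` (block `[k, b + 1]`). In `w = W_n` this would
give a factor `(k - 1) b` or factors `c (k - 1)` and `c b`; for `n ≤ 2k - 3` neither occurs, since
a letter following `0` is below `k`, and a factor `c b` with `c < k ≤ b + 1` first appears at
level `c + k - 1`.
-/

def phiBlock (k a : ℕ) : List ℕ := if a % k = k - 1 then [a + 1] else [k * (a / k), a + 1]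

def IsSquareFree {α : Type*} (w : List α) : Prop := ∀ U : List α, U ≠ [] → ¬ U ++ U <:+: w

section Morphism

variable {k : ℕ}

@[simp] theorem phiW_nil : phiW k [] = [] := rfl

@[simp] theorem phiW_cons (a : ℕ) (w : List ℕ) : phiW k (a :: w) = phiBlock k a ++ phiW k w :=
  rfl

@[simp] theorem phiW_append (u v : List ℕ) : phiW k (u ++ v) = phiW k u ++ phiW k v :=
  List.flatMap_append

theorem not_dvd_succ_of_mod_ne {a : ℕ} (h : a % k ≠ k - 1) : ¬ k ∣ a + 1 := by
  intro hdvd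
  have hdiv := Nat.mod_add_div a k
  rcases Nat.eq_zero_or_pos k with rfl | hk
  · simp at hdvd
  have hlt := Nat.mod_lt a hk
  rw [← hdiv, add_comm (a % k), add_assoc, Nat.dvd_add_right (dvd_mul_right k _)] at hdvd
  have := Nat.le_of_dvd (Nat.succ_pos _) hdvd
  omega

theorem dvd_succ_of_mod_eq {a : ℕ} (h : a % k = k - 1) (hk : 0 < k) : k ∣ a + 1 :=
  ⟨a / k + 1, by have := Nat.mod_add_div a k; rw [Nat.mul_succ]; omega⟩

theorem phiBlock_eq_append_singleton (a : ℕ) : ∃ p, phiBlock k a = p ++ [a + 1] := by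
  unfold phiBlock
  split
  · exact ⟨[], rfl⟩
  · exact ⟨[k * (a / k)], rfl⟩

theorem phiBlock_ne_nil (a : ℕ) : phiBlock k a ≠ [] := by
  obtain ⟨p, hp⟩ := phiBlock_eq_append_singleton (k := k) a
  simp [hp]

theorem phiBlock_injective : Function.Injective (phiBlock k) := by
  intro a b h
  obtain ⟨p, hp⟩ := phiBlock_eq_append_singleton (k := k) a
  obtain ⟨q, hq⟩ := phiBlock_eq_append_singleton (k := k) b
  rw [hp, hq] at h
  simpa using (List.append_inj' h rfl).2

theorem phiBlock_eq_cons (hk : 0 < k) (a : ℕ) :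
    ∃ c t, phiBlock k a = c :: t ∧ k ∣ c ∧ c ≤ a + 1 := by
  unfold phiBlock
  split
  case isTrue h => exact ⟨a + 1, [], rfl, dvd_succ_of_mod_eq h hk, le_rfl⟩
  case isFalse =>
    exact ⟨k * (a / k), [a + 1], rfl, dvd_mul_right k _, (Nat.mul_div_le a k).trans a.le_succ⟩

theorem phiBlock_eq_append {a : ℕ} {x m : List ℕ} (h : phiBlock k a = x ++ m) :
    x = [] ∨ m = [] ∨ a % k ≠ k - 1 ∧ x = [k * (a / k)] ∧ m = [a + 1] := by
  unfold phiBlock at h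
  split at h
  · rcases List.singleton_eq_append_iff.1 h with ⟨hx, -⟩ | ⟨-, hm⟩ <;> simp [*]
  · rcases x with _ | ⟨c, _ | ⟨d, x⟩⟩ <;> simp_all

theorem phiW_eq_nil_iff {w : List ℕ} : phiW k w = [] ↔ w = [] := by
  cases w <;> simp [phiBlock_ne_nil]

theorem phiBlock_eq_singleton {a c : ℕ} (h : phiBlock k a = [c]) : a % k = k - 1 ∧ a + 1 = c := by
  unfold phiBlock at h
  split at h <;> simp_all

theorem le_of_mem_phiBlock {a b : ℕ} (h : a ∈ phiBlock k b) : a ≤ b + 1 := by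
  unfold phiBlock at h
  split at h
  · simp_all
  · simp only [List.mem_cons, List.not_mem_nil, or_false] at h
    rcases h with rfl | rfl
    · exact (Nat.mul_div_le b k).trans b.le_succ
    · rfl

theorem dvd_of_phiW_eq_cons (hk : 0 < k) {w z : List ℕ} {c : ℕ} (h : phiW k w = c :: z) :
    k ∣ c := by
  rcases w with _ | ⟨a, w⟩
  · simp at h
  obtain ⟨d, t, hd, hdvd, -⟩ := phiBlock_eq_cons hk a
  rw [phiW_cons, hd, List.cons_append, List.cons.injEq] at h
  exact h.1 ▸ hdvd

theorem phiW_eq_append_singleton {w x : List ℕ} {c : ℕ} (h : phiW k w = x ++ [c]) :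
    ∃ v a, w = v ++ [a] ∧ c = a + 1 := by
  rcases List.eq_nil_or_concat w with rfl | ⟨v, a, rfl⟩
  · simp at h
  obtain ⟨p, hp⟩ := phiBlock_eq_append_singleton (k := k) a
  rw [List.concat_eq_append, phiW_append, phiW_cons, phiW_nil, List.append_nil, hp,
    ← List.append_assoc] at h
  exact ⟨v, a, List.concat_eq_append .., by simpa using (List.append_inj' h rfl).2.symm⟩

/-- Every cut of `phiW k w` falls either between two blocks or inside a two-letter block. -/
theorem phiW_eq_append {w x z : List ℕ} (h : phiW k w = x ++ z) :
    ∃ u v, w = u ++ v ∧ (phiW k u = x ∧ phiW k v = z ∨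
      ∃ a v', v = a :: v' ∧ a % k ≠ k - 1 ∧ x = phiW k u ++ [k * (a / k)] ∧
        z = (a + 1) :: phiW k v') := by
  induction w generalizing x with
  | nil =>
    obtain ⟨rfl, rfl⟩ := List.append_eq_nil_iff.1 h.symm
    exact ⟨[], [], rfl, Or.inl ⟨rfl, rfl⟩⟩
  | cons a w ih =>
    rw [phiW_cons] at h
    rcases List.append_eq_append_iff.1 h with ⟨m, rfl, hm⟩ | ⟨m, hblock, rfl⟩
    · obtain ⟨u, v, rfl, hcut⟩ := ih hm
      refine ⟨a :: u, v, rfl, ?_⟩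
      rcases hcut with ⟨rfl, hv⟩ | ⟨b, v', hv, hb, rfl, hz⟩
      · exact Or.inl ⟨rfl, hv⟩
      · exact Or.inr ⟨b, v', hv, hb, by simp, hz⟩
    · rcases phiBlock_eq_append hblock with rfl | rfl | ⟨ha, rfl, rfl⟩
      · exact ⟨[], a :: w, rfl, Or.inl ⟨rfl, by simp [hblock]⟩⟩
      · exact ⟨[a], w, rfl, Or.inl ⟨by simp [hblock], rfl⟩⟩
      · exact ⟨[], a :: w, rfl, Or.inr ⟨a, w, rfl, ha, rfl, rfl⟩⟩

theorem phiW_eq_append_of_dvd {w x z : List ℕ} (h : phiW k w = x ++ z)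
    (hz : ∀ c ∈ z.head?, k ∣ c) : ∃ u v, w = u ++ v ∧ phiW k u = x ∧ phiW k v = z := by
  obtain ⟨u, v, rfl, ⟨hu, hv⟩ | ⟨a, v', -, ha, -, rfl⟩⟩ := phiW_eq_append h
  · exact ⟨u, v, rfl, hu, hv⟩
  · exact absurd (hz _ rfl) (not_dvd_succ_of_mod_ne ha)

theorem phiW_eq_append_cons_of_not_dvd (hk : 0 < k) {w x z : List ℕ} {d : ℕ}
    (h : phiW k w = x ++ d :: z) (hd : ¬ k ∣ d) : ∃ x', x = x' ++ [k * ((d - 1) / k)] := by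
  obtain ⟨u, v, rfl, ⟨-, hv⟩ | ⟨a, v', -, -, rfl, hz⟩⟩ := phiW_eq_append h
  · exact absurd (dvd_of_phiW_eq_cons hk hv) hd
  · obtain rfl : d = a + 1 := (List.cons.inj hz).1
    exact ⟨phiW k u, rfl⟩

theorem lt_of_phiW_eq_append_zero_cons (hk : 0 < k) {w x z : List ℕ} {d : ℕ}
    (h : phiW k w = x ++ 0 :: d :: z) : d < k := by
  rw [← List.singleton_append, ← List.append_assoc] at h
  obtain ⟨u, v, rfl, ⟨hu, -⟩ | ⟨a, v', -, ha, hx, hz⟩⟩ := phiW_eq_append h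
  · obtain ⟨-, a, -, ha⟩ := phiW_eq_append_singleton hu
    omega
  · obtain rfl : d = a + 1 := (List.cons.inj hz).1
    have h0 : k * (a / k) = 0 := by simpa using (List.append_inj' hx rfl).2.symm
    have ha' : a < k := by
      simpa [hk.ne', Nat.div_eq_zero_iff] using h0
    rw [Nat.mod_eq_of_lt ha'] at ha
    omega

theorem phiW_eq_phiW_append (hk : 0 < k) {w z y : List ℕ} (h : phiW k w = phiW k z ++ y) :
    z <+: w ∨ ∃ Z a b v, z = Z ++ [a] ∧ w = Z ++ b :: v ∧ a % k = k - 1 ∧ a + 1 = k * (b / k) := by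
  induction z generalizing w with
  | nil => exact Or.inl (List.nil_prefix)
  | cons a z ih =>
    rcases w with _ | ⟨b, w⟩
    · simp [eq_comm, phiBlock_ne_nil] at h
    rw [phiW_cons, phiW_cons, List.append_assoc] at h
    have recurse (hab : a = b) (hw : phiW k w = phiW k z ++ y) : a :: z <+: b :: w ∨
        ∃ Z a' b' v, a :: z = Z ++ [a'] ∧ b :: w = Z ++ b' :: v ∧ a' % k = k - 1 ∧
          a' + 1 = k * (b' / k) := by
      subst hab
      rcases ih hw with hpre | ⟨Z, a', b', v, rfl, rfl, ha', hb'⟩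
      · exact Or.inl (List.cons_prefix_cons.2 ⟨rfl, hpre⟩)
      · exact Or.inr ⟨a :: Z, a', b', v, rfl, rfl, ha', hb'⟩
    rcases List.append_eq_append_iff.1 h with ⟨m, hblock, hm⟩ | ⟨m, hblock, hm⟩
    · rcases phiBlock_eq_append hblock with hnil | rfl | ⟨hb, -, rfl⟩
      · exact absurd hnil (phiBlock_ne_nil b)
      · exact recurse (phiBlock_injective (by simpa using hblock)) (by simpa using hm)
      · exact absurd (dvd_of_phiW_eq_cons hk hm) (not_dvd_succ_of_mod_ne hb)
    · rcases phiBlock_eq_append hblock with hnil | rfl | ⟨hb, hab, rfl⟩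
      · exact absurd hnil (phiBlock_ne_nil a)
      · exact recurse (phiBlock_injective (by simpa using hblock)).symm (by simpa using hm.symm)
      · rcases List.append_eq_cons_iff.1 hm with ⟨hz, -⟩ | ⟨t, hz, -⟩
        · obtain rfl := phiW_eq_nil_iff.1 hz
          obtain ⟨ha, hab⟩ := phiBlock_eq_singleton hab
          exact Or.inr ⟨[], a, b, w, rfl, rfl, ha, hab⟩
        · exact absurd (dvd_of_phiW_eq_cons hk hz) (not_dvd_succ_of_mod_ne hb)

/-- A letter not divisible by `k` is always preceded by the same letter, which is divisible by `k`,
so a square can be shifted to start at a block boundary. -/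
theorem exists_square_infix_phiW_dvd_head (hk : 0 < k) {w U : List ℕ} (hU : U ≠ [])
    (h : U ++ U <:+: phiW k w) : ∃ c V, k ∣ c ∧ (c :: V) ++ (c :: V) <:+: phiW k w := by
  rcases U with _ | ⟨u, U⟩
  · contradiction
  by_cases hu : k ∣ u
  · exact ⟨u, U, hu, h⟩
  obtain ⟨x, y, hxy⟩ := h
  obtain ⟨U', c, hUc⟩ : ∃ U' c, u :: U = U' ++ [c] :=
    ⟨_, _, (List.dropLast_append_getLast (List.cons_ne_nil u U)).symm⟩
  obtain ⟨x', rfl⟩ := phiW_eq_append_cons_of_not_dvd hk (x := x) (z := U ++ u :: U ++ y)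
    (by rw [← hxy]; simp) hu
  obtain ⟨x'', hx''⟩ := phiW_eq_append_cons_of_not_dvd hk
    (x := x' ++ [k * ((u - 1) / k)] ++ U' ++ [c]) (z := U ++ y)
    (by rw [← hxy]; nth_rw 1 [hUc]; simp) hu
  have hc : k * ((u - 1) / k) = c := by simpa using (List.append_inj' hx'' rfl).2.symm
  refine ⟨c, U', hc ▸ dvd_mul_right _ _, x', c :: y, ?_⟩
  rw [← hxy, hUc, hc]
  simp

theorem IsSquareFree.phiW (hk : 0 < k) {w : List ℕ} (hw : IsSquareFree w)
    (hpat : ∀ Z a b, a % k = k - 1 → a + 1 = k * (b / k) → ¬ Z ++ a :: Z ++ [b] <:+: w) :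
    IsSquareFree (phiW k w) := by
  intro U hU h
  obtain ⟨c, V, hc, x, y, hxy⟩ := exists_square_infix_phiW_dvd_head hk hU h
  obtain ⟨u, v, rfl, -, hv⟩ := phiW_eq_append_of_dvd (x := x) (z := (c :: V) ++ (c :: V) ++ y)
    (by rw [← hxy]; simp) (by simpa using hc)
  obtain ⟨z, t, rfl, hz, ht⟩ := phiW_eq_append_of_dvd (x := c :: V) (z := (c :: V) ++ y)
    (by rw [hv]; simp) (by simpa using hc)
  have hz0 : z ≠ [] := by rintro rfl; simp at hz
  rcases phiW_eq_phiW_append hk (w := t) (z := z) (y := y) (by rw [ht, hz]) with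
    ⟨s, rfl⟩ | ⟨Z, a, b, s, rfl, rfl, ha, hb⟩
  · exact hw z hz0 ⟨u, s, by simp⟩
  · exact hpat Z a b ha hb ⟨u, s, by simp⟩

end Morphism

section KBonacciWord

variable {k : ℕ}

theorem W_zero (k : ℕ) : W k 0 = [0] := rfl

theorem W_succ (k n : ℕ) : W k (n + 1) = phiW k (W k n) :=
  Function.iterate_succ_apply' _ _ _

theorem le_of_mem_W {n a : ℕ} (h : a ∈ W k n) : a ≤ n := by
  induction n generalizing a with
  | zero => simpa [W_zero] using h
  | succ n ih =>
    rw [W_succ] at h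
    obtain ⟨b, hb, hab⟩ := List.mem_flatMap.1 h
    exact (le_of_mem_phiBlock hab).trans (Nat.succ_le_succ (ih hb))

theorem add_le_of_pair_infix_W (hk : 0 < k) {n c b : ℕ} (h : [c, b] <:+: W k n) (hc : c < k)
    (hb : k ≤ b + 1) : c + k ≤ n + 1 := by
  induction n generalizing c b with
  | zero => simpa [W_zero] using h.length_le
  | succ n ih =>
    have hbn : b ≤ n + 1 := le_of_mem_W (h.subset (by simp))
    obtain ⟨s, t, hst⟩ := h
    rw [W_succ] at hst
    obtain ⟨u, v, huv, ⟨hu, hv⟩ | ⟨a, v', -, -, hx, -⟩⟩ :=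
      phiW_eq_append (x := s ++ [c]) (z := b :: t) (by rw [← hst]; simp)
    · obtain ⟨u', a, rfl, rfl⟩ := phiW_eq_append_singleton hu
      rcases v with _ | ⟨b', v⟩
      · simp at hv
      obtain ⟨d, r, hd, hdvd, hle⟩ := phiBlock_eq_cons hk b'
      rw [phiW_cons, hd, List.cons_append, List.cons.injEq] at hv
      obtain ⟨rfl, -⟩ := hv
      have hkd : k ≤ d := Nat.le_of_dvd (by omega) hdvd
      have := ih (c := a) (b := b') ⟨u', v, by simp [huv]⟩ (by omega) (by omega)
      omega
    · obtain rfl : c = k * (a / k) := by simpa using (List.append_inj' hx rfl).2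
      have := Nat.eq_zero_of_dvd_of_lt (dvd_mul_right _ _) hc
      omega

theorem not_infix_W_of_mod_eq (hk : 2 ≤ k) {n : ℕ} (hn : n + 3 ≤ 2 * k) {Z : List ℕ} {a b : ℕ}
    (ha : a % k = k - 1) (hab : a + 1 = k * (b / k)) : ¬ Z ++ a :: Z ++ [b] <:+: W k n := by
  intro h
  have hk0 : 0 < k := by omega
  obtain rfl : a = k - 1 := by
    have han : a ≤ n := le_of_mem_W (h.subset (by simp))
    have hdiv := Nat.mod_add_div a k
    have : a / k = 0 := by
      by_contra h0
      have := Nat.le_mul_of_pos_right k (Nat.pos_of_ne_zero h0)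
      omega
    rw [this, mul_zero] at hdiv
    omega
  have hkb : k ≤ b := by
    have := Nat.mul_div_le b k
    omega
  rcases List.eq_nil_or_concat Z with rfl | ⟨Z, c, rfl⟩
  · have := add_le_of_pair_infix_W hk0 (by simpa using h) (by omega) (by omega)
    omega
  rcases n with _ | n
  · have := le_of_mem_W (h.subset (by simp : k - 1 ∈ _))
    omega
  obtain ⟨s, t, hst⟩ := h
  rw [W_succ] at hst
  obtain ⟨x, hx⟩ := phiW_eq_append_cons_of_not_dvd hk0 (x := s ++ Z ++ [c]) (d := k - 1)
    (z := Z ++ [c, b] ++ t) (by rw [← hst]; simp) (Nat.not_dvd_of_pos_of_lt (by omega) (by omega))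
  obtain rfl : c = 0 := by
    simpa [Nat.div_eq_of_lt (show k - 1 - 1 < k by omega)] using (List.append_inj' hx rfl).2
  have := lt_of_phiW_eq_append_zero_cons hk0 (x := s ++ Z ++ [0, k - 1] ++ Z) (d := b) (z := t)
    (by rw [← hst]; simp)
  omega

theorem isSquareFree_W (hk : 2 ≤ k) {n : ℕ} (hn : n + 2 ≤ 2 * k) : IsSquareFree (W k n) := by
  induction n with
  | zero =>
    intro U hU h
    have hlen := h.length_le
    rw [List.length_append, W_zero, List.length_singleton] at hlen
    exact hU (List.eq_nil_of_length_eq_zero (by omega))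
  | succ n ih =>
    rw [W_succ]
    exact (ih (by omega)).phiW (by omega) fun _ _ _ ha hab =>
      not_infix_W_of_mod_eq hk (by omega) ha hab

end KBonacciWord

theorem no_square_below_2k1 (k n : ℕ) (hk : 2 < k) (hn : n < 2 * k - 1) :
    ∀ U : List ℕ, U ≠ [] → ¬ (U ++ U) <:+: W k n :=
  isSquareFree_W hk.le (by omega)
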